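/- Let β > 0, s ≥ 0, and let n ≥ 1 be an integer. Then for every t ≥ 0: ∫_0^t exp( −(n/2) ∫_0^r (β+S_u) du ) · (n/2)(β+S_r) · exp( −((n−1)/2) ∫_r^t (β+S_u) du ) dr = n p(t)^{n−1} (1 − p(t)). That is, the probability that the pure-death process which, in state k, jumps to k−1 at time-inhomogeneous rate k(β+S_t)/2, makes exactly one jump in [0,t] when started from n, equals the binomial probability Bin(n−1; n, p(t)) (the one-jump computation in the proof of Proposition 4.2). -/

import Mathlib

open MeasureTheory intervalIntegral

/-- The deterministic dual component `S_t = βs / ((β+s)e^{βt/2} - s)`. -/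
noncomputable def Sfun (β s t : ℝ) : ℝ :=
  β * s / ((β + s) * Real.exp (β * t / 2) - s)

/-- The no-jump probability parameter `p(t) = β / ((β+s)e^{βt/2} - s)`. -/
noncomputable def pfun (β s t : ℝ) : ℝ :=
  β / ((β + s) * Real.exp (β * t / 2) - s)

/-!
For a rate `ρ` with primitive `R`, put `q(r) = exp (-(R r - R a) / 2)`, the probability
that a single particle, dying at rate `ρ/2`, survives `[a, r]`. The exponents in the
integrand combine so that it equals `n q(b)^(n-1) · q(r) ρ(r) / 2 = -n q(b)^(n-1) q'(r)`,
whence the integral is `n q(b)^(n-1) (1 - q(b))`. For the rate `β + S` one may take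
`R = -2 log p`, because `S = s p` and `p` solves the Riccati equation `p' = -p (β + s p) / 2`;
as `p 0 = 1`, then `q = p`.
-/

open Real Set

/-- Density of the time of the only jump in `[a, b]` of the pure-death process started from `n`,
which in state `k` jumps to `k - 1` at rate `k ρ / 2`. -/
noncomputable def oneJumpDensity (ρ : ℝ → ℝ) (n : ℕ) (a b r : ℝ) : ℝ :=
  exp (-((n : ℝ) / 2) * ∫ u in a..r, ρ u) * ((n : ℝ) / 2 * ρ r) *
    exp (-(((n : ℝ) - 1) / 2) * ∫ u in r..b, ρ u)

section OneJump

variable {ρ R : ℝ → ℝ} {a b : ℝ}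

theorem oneJumpDensity_succ_eq (hR : ∀ x ∈ uIcc a b, HasDerivAt R (ρ x) x)
    (hρ : IntervalIntegrable ρ volume a b) (n : ℕ) {r : ℝ} (hr : r ∈ uIcc a b) :
    oneJumpDensity ρ (n + 1) a b r =
      (n + 1) * exp (-(R b - R a) / 2) ^ n * (exp (-(R r - R a) / 2) * ρ r / 2) := by
  have hsub_left : uIcc a r ⊆ uIcc a b := uIcc_subset_uIcc left_mem_uIcc hr
  have hsub_right : uIcc r b ⊆ uIcc a b := uIcc_subset_uIcc hr right_mem_uIcc
  have hleft : ∫ u in a..r, ρ u = R r - R a :=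
    integral_eq_sub_of_hasDerivAt (fun x hx => hR x (hsub_left hx)) (hρ.mono_set hsub_left)
  have hright : ∫ u in r..b, ρ u = R b - R r :=
    integral_eq_sub_of_hasDerivAt (fun x hx => hR x (hsub_right hx)) (hρ.mono_set hsub_right)
  rw [oneJumpDensity, hleft, hright, ← exp_nat_mul]
  push_cast
  have hexp : exp (-((n + 1) / 2) * (R r - R a)) * exp (-((n + 1 - 1) / 2) * (R b - R r)) =
      exp (n * (-(R b - R a) / 2)) * exp (-(R r - R a) / 2) := by
    rw [← exp_add, ← exp_add]
    ring_nf
  linear_combination (n + 1) / 2 * ρ r * hexp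

theorem hasDerivAt_exp_neg_half_sub {x : ℝ} (hx : HasDerivAt R (ρ x) x) :
    HasDerivAt (fun y => exp (-(R y - R a) / 2)) (-(exp (-(R x - R a) / 2) * ρ x / 2)) x := by
  have hexponent : HasDerivAt (fun y => -(R y - R a) / 2) (-ρ x / 2) x :=
    (hx.sub_const (R a)).neg.div_const 2
  exact hexponent.exp.congr_deriv (by ring)

theorem integral_oneJumpDensity (hR : ∀ x ∈ uIcc a b, HasDerivAt R (ρ x) x)
    (hρ : ContinuousOn ρ (uIcc a b)) (n : ℕ) :
    ∫ r in a..b, oneJumpDensity ρ n a b r =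
      n * exp (-(R b - R a) / 2) ^ (n - 1) * (1 - exp (-(R b - R a) / 2)) := by
  cases n with
  | zero => simp [oneJumpDensity]
  | succ n =>
    set c : ℝ := (n + 1) * exp (-(R b - R a) / 2) ^ n
    have hRcont : ContinuousOn R (uIcc a b) := fun x hx =>
      (hR x hx).continuousAt.continuousWithinAt
    have hderiv : ∀ x ∈ uIcc a b, HasDerivAt (fun y => -c * exp (-(R y - R a) / 2))
        (c * (exp (-(R x - R a) / 2) * ρ x / 2)) x := fun x hx =>
      ((hasDerivAt_exp_neg_half_sub (hR x hx)).const_mul (-c)).congr_deriv (by ring)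
    have hcont : ContinuousOn (fun x => c * (exp (-(R x - R a) / 2) * ρ x / 2)) (uIcc a b) := by
      fun_prop
    rw [integral_congr fun r hr => oneJumpDensity_succ_eq hR hρ.intervalIntegrable n hr,
      integral_eq_sub_of_hasDerivAt hderiv hcont.intervalIntegrable]
    simp only [sub_self, zero_div, neg_zero, exp_zero, c]
    push_cast
    ring

end OneJump

section Riccati

variable {β s t : ℝ}

theorem Sfun_eq_mul_pfun : Sfun β s t = s * pfun β s t := by
  rw [Sfun, pfun, mul_comm β s, mul_div_assoc]

theorem pfun_zero (hβ : β ≠ 0) : pfun β s 0 = 1 := by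
  simp [pfun, hβ]

theorem pfun_denom_pos (hβ : 0 < β) (hs : 0 ≤ s) (ht : 0 ≤ t) :
    0 < (β + s) * exp (β * t / 2) - s := by
  have hexp : 1 ≤ exp (β * t / 2) := one_le_exp (by positivity)
  nlinarith

theorem pfun_pos (hβ : 0 < β) (hs : 0 ≤ s) (ht : 0 ≤ t) : 0 < pfun β s t :=
  div_pos hβ (pfun_denom_pos hβ hs ht)

theorem hasDerivAt_pfun (h : (β + s) * exp (β * t / 2) - s ≠ 0) :
    HasDerivAt (pfun β s) (-(pfun β s t * (β + s * pfun β s t)) / 2) t := by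
  have hdenom : HasDerivAt (fun u => (β + s) * exp (β * u / 2) - s)
      ((β + s) * (exp (β * t / 2) * (β / 2))) t := by
    have hlin : HasDerivAt (fun u => β * u / 2) (β / 2) t := by
      simpa using ((hasDerivAt_id t).const_mul β).div_const 2
    exact (hlin.exp.const_mul (β + s)).sub_const s
  refine ((hdenom.inv h).const_mul β).congr_deriv ?_
  simp only [pfun]
  field_simp
  ring

theorem hasDerivAt_neg_two_mul_log_pfun (hβ : 0 < β) (hs : 0 ≤ s) (ht : 0 ≤ t) :
    HasDerivAt (fun u => -2 * log (pfun β s u)) (β + Sfun β s t) t := by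
  have hpos := pfun_pos hβ hs ht
  have hp := (hasDerivAt_pfun (pfun_denom_pos hβ hs ht).ne').log hpos.ne'
  refine (hp.const_mul (-2)).congr_deriv ?_
  rw [Sfun_eq_mul_pfun]
  field_simp

theorem continuousOn_const_add_Sfun (hβ : 0 < β) (hs : 0 ≤ s) :
    ContinuousOn (fun u => β + Sfun β s u) (Ici 0) := by
  refine continuousOn_const.add (continuousOn_const.div (by fun_prop) fun u hu => ?_)
  exact (pfun_denom_pos hβ hs hu).ne'

end Riccati

theorem stmt8_general (β : ℝ) (hβ : 0 < β) (s : ℝ) (hs : 0 ≤ s) (n : ℕ)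
    (t : ℝ) (ht : 0 ≤ t) :
    (∫ r in (0 : ℝ)..t,
        Real.exp (-((n : ℝ) / 2) * ∫ u in (0 : ℝ)..r, (β + Sfun β s u)) *
          ((n : ℝ) / 2 * (β + Sfun β s r)) *
          Real.exp (-(((n : ℝ) - 1) / 2) * ∫ u in r..t, (β + Sfun β s u)))
      = (n : ℝ) * pfun β s t ^ (n - 1) * (1 - pfun β s t) := by
  have hIcc : uIcc 0 t = Icc 0 t := uIcc_of_le ht
  have hR : ∀ u ∈ uIcc 0 t,
      HasDerivAt (fun u => -2 * log (pfun β s u)) (β + Sfun β s u) u := fun u hu =>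
    hasDerivAt_neg_two_mul_log_pfun hβ hs (by rw [hIcc] at hu; exact hu.1)
  have hρ : ContinuousOn (fun u => β + Sfun β s u) (uIcc 0 t) :=
    (continuousOn_const_add_Sfun hβ hs).mono (by rw [hIcc]; exact Icc_subset_Ici_self)
  have hsurvival : exp (-(-2 * log (pfun β s t) - -2 * log (pfun β s 0)) / 2) = pfun β s t := by
    rw [pfun_zero hβ.ne', log_one]
    convert exp_log (pfun_pos hβ hs ht) using 2
    ring
  have hmain := integral_oneJumpDensity hR hρ n
  rwa [hsurvival] at hmain

/-- The one-jump computation in the proof of Proposition 4.2: the probability that the pure-death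
process which, in state `k`, jumps to `k-1` at rate `k(β+S_t)/2`, makes exactly one jump in
`[0,t]` when started from `n`, equals `Bin(n-1; n, p(t)) = n p(t)^{n-1} (1 - p(t))`. -/
theorem stmt8 (β : ℝ) (hβ : 0 < β) (s : ℝ) (hs : 0 ≤ s) (n : ℕ) (hn : 1 ≤ n)
    (t : ℝ) (ht : 0 ≤ t) :
    (∫ r in (0 : ℝ)..t,
        Real.exp (-((n : ℝ) / 2) * ∫ u in (0 : ℝ)..r, (β + Sfun β s u)) *
          ((n : ℝ) / 2 * (β + Sfun β s r)) *
          Real.exp (-(((n : ℝ) - 1) / 2) * ∫ u in r..t, (β + Sfun β s u)))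
      = (n : ℝ) * pfun β s t ^ (n - 1) * (1 - pfun β s t) :=
  stmt8_general β hβ s hs n t ht
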